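/- Let Q and Q' be monomial primary ideals of S = K[x_1,…,x_n] with √Q = (x_1,…,x_t) and √Q' = (x_{t+1},…,x_n), where t ≥ 2 and n ≥ 4. Then sdepth(Q ∩ Q') ≤ (n+2)/2, i.e. 2·sdepth(Q ∩ Q') ≤ n + 2. -/

import Mathlib

open MvPolynomial

variable {K : Type*} [Field K]

/-- The Stanley space `u·K[Z]`: the `K`-linear span of all `u * v` where `v` is a
monomial in the variables of `Z`. -/
noncomputable def stanleySpace {n : ℕ} (u : MvPolynomial (Fin n) K) (Z : Finset (Fin n)) :
    Submodule K (MvPolynomial (Fin n) K) :=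
  Submodule.span K { w | ∃ d : Fin n →₀ ℕ, ↑d.support ⊆ (Z : Set (Fin n)) ∧
    w = u * MvPolynomial.monomial d 1 }

/-- `u` is a monomial. -/
def IsMonomial {n : ℕ} (u : MvPolynomial (Fin n) K) : Prop :=
  ∃ d : Fin n →₀ ℕ, u = MvPolynomial.monomial d 1

/-- A monomial ideal: an ideal generated by monomials. -/
def IsMonomialIdeal {n : ℕ} (I : Ideal (MvPolynomial (Fin n) K)) : Prop :=
  ∃ G : Set (MvPolynomial (Fin n) K), (∀ u ∈ G, IsMonomial u) ∧ I = Ideal.span G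

/-- `(u i, Z i)` is a Stanley decomposition of the ideal `I`:
`I = ⊕ᵢ uᵢ K[Zᵢ]` as `K`-vector spaces, with each `uᵢ` a monomial. -/
def IsStanleyDecomp {n : ℕ} (I : Ideal (MvPolynomial (Fin n) K)) {s : ℕ}
    (u : Fin s → MvPolynomial (Fin n) K) (Z : Fin s → Finset (Fin n)) : Prop :=
  (∀ i, IsMonomial (u i)) ∧
  iSupIndep (fun i => stanleySpace (u i) (Z i)) ∧
  (⨆ i, stanleySpace (u i) (Z i)) = Submodule.restrictScalars K I

/-- The Stanley depth of a monomial ideal: the largest `k` such that there is a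
Stanley decomposition all of whose Stanley spaces have dimension at least `k`. -/
noncomputable def sdepth {n : ℕ} (I : Ideal (MvPolynomial (Fin n) K)) : ℕ :=
  sSup { k | ∃ (s : ℕ) (u : Fin s → MvPolynomial (Fin n) K) (Z : Fin s → Finset (Fin n)),
    IsStanleyDecomp I u Z ∧ ∀ i, k ≤ (Z i).card }

/-!
Let `L` be the set of variables of `√Q`. Take `x^w₁` maximal among the monomials in the variables
of `L` outside `Q`, and `x^w₂` likewise for `Lᶜ` and `Q'`. Primality gives, for `w = w₁ + w₂`,
`x^w x_j ∉ Q ∩ Q'` for every `j` but `x^w x_a x_b ∈ Q ∩ Q'` for `a ∈ L`, `b ∉ L`. In a Stanley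
decomposition of `Q ∩ Q'` into spaces of dimension `≥ k`, the space containing `x^w x_a x_b` contains
`x^w x_a x_b x_c` for at least `k - 2` variables `c ∉ {a, b}`. Its generator divides `x^w x_a x_b`
but no `x^w x_j`, so distinct pairs `(a, b)` give disjoint families of triples `{a, b, c}`, each
meeting both `L` and `Lᶜ`. There are `|L| |Lᶜ| (n - 2) / 2` such triples, hence
`|L| |Lᶜ| (k - 2) ≤ |L| |Lᶜ| (n - 2) / 2`. If `L` or `Lᶜ` is empty, `Q ∩ Q' = 0`.
-/

open Finset

section Exponents

variable {σ : Type*}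

theorem coe_support_add_single_subset [DecidableEq σ] {w : σ →₀ ℕ} {A : Set σ} {a : σ}
    (hw : ↑w.support ⊆ A) (ha : a ∈ A) : ↑(w + Finsupp.single a 1).support ⊆ A := by
  intro j hj
  rcases mem_union.mp (Finsupp.support_add hj) with hj | hj
  · exact hw hj
  · rwa [mem_singleton.mp (Finsupp.support_single_subset hj)]

theorem le_add_single_of_le_add_single_add_single {g w : σ →₀ ℕ} {a b a' b' : σ}
    (h : g ≤ w + Finsupp.single a 1 + Finsupp.single b 1)
    (h' : g ≤ w + Finsupp.single a' 1 + Finsupp.single b' 1) (hba' : b ≠ a') (hbb' : b ≠ b') :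
    g ≤ w + Finsupp.single a 1 := by
  classical
  intro x
  have hx := h x
  have hx' := h' x
  simp only [Finsupp.add_apply, Finsupp.single_apply] at hx hx' ⊢
  split_ifs at hx hx' ⊢ <;> subst_vars <;> first | omega | contradiction

def stanleyExponents (d : σ →₀ ℕ) (Z : Finset σ) : Set (σ →₀ ℕ) :=
  {g | ∃ e : σ →₀ ℕ, ↑e.support ⊆ (Z : Set σ) ∧ g = d + e}

theorem self_mem_stanleyExponents (d : σ →₀ ℕ) (Z : Finset σ) : d ∈ stanleyExponents d Z :=
  ⟨0, by simp, by simp⟩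

theorem le_of_mem_stanleyExponents {d g : σ →₀ ℕ} {Z : Finset σ}
    (h : g ∈ stanleyExponents d Z) : d ≤ g := by
  obtain ⟨e, -, rfl⟩ := h
  exact le_self_add

theorem add_single_mem_stanleyExponents [DecidableEq σ] {d g : σ →₀ ℕ} {Z : Finset σ} {c : σ}
    (h : g ∈ stanleyExponents d Z) (hc : c ∈ Z) :
    g + Finsupp.single c 1 ∈ stanleyExponents d Z := by
  obtain ⟨e, he, rfl⟩ := h
  exact ⟨e + Finsupp.single c 1, coe_support_add_single_subset he hc, add_assoc _ _ _⟩

end Exponents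

section Primary

variable {σ R : Type*} [CommSemiring R] {Q Q' : Ideal (MvPolynomial σ R)} {A : Set σ}

theorem monomial_one_mem_of_le {g h : σ →₀ ℕ} (hg : monomial g (1 : R) ∈ Q) (hgh : g ≤ h) :
    monomial h (1 : R) ∈ Q := by
  simpa [monomial_mul, add_tsub_cancel_of_le hgh] using Q.mul_mem_right (monomial (h - g) 1) hg

theorem exists_maximal_monomial_notMem [Finite σ] (hQ : Q ≠ ⊤) (hA : ∀ a ∈ A, X a ∈ Q.radical) :
    ∃ w : σ →₀ ℕ, ↑w.support ⊆ A ∧ monomial w (1 : R) ∉ Q ∧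
      ∀ a ∈ A, monomial (w + Finsupp.single a 1) (1 : R) ∈ Q := by
  classical
  have hpow (a : σ) : ∃ c : ℕ, a ∈ A → monomial (Finsupp.single a c) (1 : R) ∈ Q := by
    by_cases ha : a ∈ A
    · obtain ⟨c, hc⟩ := Ideal.mem_radical_iff.mp (hA a ha)
      exact ⟨c, fun _ => by rwa [X_pow_eq_monomial] at hc⟩
    · exact ⟨0, fun h => absurd h ha⟩
  choose c hc using hpow
  set S : Set (σ →₀ ℕ) := {w | ↑w.support ⊆ A ∧ monomial w (1 : R) ∉ Q}
  have hbdd : S ⊆ Set.Iic (Finsupp.equivFunOnFinite.symm c) := by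
    rintro w ⟨hwA, hwQ⟩ j
    by_cases hj : j ∈ A
    · by_contra hlt
      exact hwQ (monomial_one_mem_of_le (hc j hj)
        (Finsupp.single_le_iff.mpr (by simpa using (not_le.mp hlt).le)))
    · simp [Finsupp.notMem_support_iff.mp fun h => hj (hwA h)]
  have hzero : (0 : σ →₀ ℕ) ∈ S :=
    ⟨by simp, by rwa [monomial_zero', C_1, ← Ideal.eq_top_iff_one]⟩
  obtain ⟨w, ⟨hwA, hwQ⟩, hmax⟩ := ((Set.finite_Iic _).subset hbdd).exists_maximal ⟨0, hzero⟩
  refine ⟨w, hwA, hwQ, fun a ha => ?_⟩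
  by_contra hwa
  have := hmax ⟨coe_support_add_single_subset hwA ha, hwa⟩ le_self_add a
  simp at this

variable [Nontrivial R]

theorem monomial_one_notMem_span_X_image {h : σ →₀ ℕ} (hh : Disjoint (h.support : Set σ) A) :
    monomial h (1 : R) ∉ Ideal.span (X '' A) := by
  classical
  rw [mem_ideal_span_X_image]
  intro hmem
  obtain ⟨i, hiA, hi⟩ := hmem h (by simp [support_monomial])
  exact Set.disjoint_left.mp hh (Finsupp.mem_support_iff.mpr hi) hiA

theorem Ideal.IsPrimary.monomial_add_notMem (hQ : Q.IsPrimary)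
    (hrad : Q.radical = Ideal.span (X '' A)) {g h : σ →₀ ℕ} (hg : monomial g (1 : R) ∉ Q)
    (hh : Disjoint (h.support : Set σ) A) : monomial (g + h) (1 : R) ∉ Q := by
  intro hgh
  rw [← one_mul (1 : R), ← monomial_mul] at hgh
  rcases (Ideal.isPrimary_iff.mp hQ).2 hgh with hg' | hh'
  · exact hg hg'
  · exact monomial_one_notMem_span_X_image hh (hrad ▸ hh')

theorem exists_exponent_of_isPrimary_of_radical_eq_compl [Finite σ] (hQ : Q.IsPrimary)
    (hQ' : Q'.IsPrimary) (hr : Q.radical = Ideal.span (X '' A))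
    (hr' : Q'.radical = Ideal.span (X '' Aᶜ)) :
    ∃ w : σ →₀ ℕ, (∀ j, monomial (w + Finsupp.single j 1) (1 : R) ∉ Q ⊓ Q') ∧
      ∀ a ∈ A, ∀ b ∉ A, monomial (w + Finsupp.single a 1 + Finsupp.single b 1) (1 : R) ∈ Q ⊓ Q' := by
  classical
  obtain ⟨w₁, hw₁A, hw₁Q, hw₁max⟩ := exists_maximal_monomial_notMem hQ.ne_top
    (fun a ha => hr ▸ Ideal.subset_span ⟨a, ha, rfl⟩)
  obtain ⟨w₂, hw₂A, hw₂Q', hw₂max⟩ := exists_maximal_monomial_notMem hQ'.ne_top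
    (fun b hb => hr' ▸ Ideal.subset_span ⟨b, hb, rfl⟩)
  refine ⟨w₁ + w₂, fun j hj => ?_, fun a ha b hb => ⟨?_, ?_⟩⟩
  · obtain ⟨hjQ, hjQ'⟩ := Ideal.mem_inf.mp hj
    by_cases hjA : j ∈ A
    · refine hQ'.monomial_add_notMem hr' hw₂Q' (h := w₁ + Finsupp.single j 1)
        (Set.disjoint_compl_right_iff_subset.mpr (coe_support_add_single_subset hw₁A hjA)) ?_
      convert hjQ' using 3
      abel
    · refine hQ.monomial_add_notMem hr hw₁Q (h := w₂ + Finsupp.single j 1)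
        (Set.subset_compl_iff_disjoint_right.mp (coe_support_add_single_subset hw₂A hjA)) ?_
      rwa [← add_assoc]
  all_goals
    have hprod : monomial (w₁ + w₂ + Finsupp.single a 1 + Finsupp.single b 1) (1 : R) =
        monomial (w₁ + Finsupp.single a 1) 1 * monomial (w₂ + Finsupp.single b 1) 1 := by
      rw [monomial_mul, one_mul]; abel_nf
  · exact hprod ▸ Q.mul_mem_right _ (hw₁max a ha)
  · exact hprod ▸ Q'.mul_mem_left _ (hw₂max b hb)

end Primary

section MixedTriples

variable {α : Type*} [Fintype α] [DecidableEq α]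

def mixedTriples (L : Finset α) : Finset (Finset α) :=
  {S ∈ powersetCard 3 univ | ¬S ⊆ L ∧ ¬S ⊆ Lᶜ}

theorem insert_pair_mem_mixedTriples {L : Finset α} {a b c : α} (ha : a ∈ L) (hb : b ∉ L)
    (hc : c ∉ ({a, b} : Finset α)) : insert c {a, b} ∈ mixedTriples L := by
  have hab : a ≠ b := fun h => hb (h ▸ ha)
  simp only [mixedTriples, mem_filter, mem_powersetCard, subset_univ, true_and,
    card_insert_of_notMem hc, card_pair hab]
  exact ⟨fun hL => hb (hL (by simp)), fun hL => mem_compl.mp (hL (by simp)) ha⟩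

theorem two_mul_add_choose_three (a b : ℕ) :
    2 * (a + b).choose 3 = 2 * a.choose 3 + 2 * b.choose 3 + a * b * (a + b - 2) := by
  have two_mul_choose_two (m : ℕ) : 2 * m.choose 2 = m * (m - 1) := by
    rw [Nat.choose_two_right]
    exact Nat.mul_div_cancel' (Nat.even_mul_pred_self m).two_dvd
  rw [Nat.add_choose_eq]
  simp only [Nat.sum_antidiagonal_succ, HasAntidiagonal.antidiagonal_zero, sum_singleton,
    Nat.choose_zero_right, Nat.choose_one_right, Nat.reduceAdd, one_mul, mul_one, zero_add]
  rcases a with _ | a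
  · simp
  rcases b with _ | b
  · simp
  have ha := two_mul_choose_two (a + 1)
  have hb := two_mul_choose_two (b + 1)
  simp only [Nat.add_sub_cancel] at ha hb
  rw [show a + 1 + (b + 1) - 2 = a + b by omega]
  nlinarith

theorem two_mul_card_mixedTriples (L : Finset α) :
    2 * #(mixedTriples L) = #L * #Lᶜ * (Fintype.card α - 2) := by
  have hsplit : {S ∈ powersetCard 3 (univ : Finset α) | S ⊆ L ∨ S ⊆ Lᶜ} =
      powersetCard 3 L ∪ powersetCard 3 Lᶜ := by
    ext S
    simp only [mem_filter, mem_powersetCard, mem_union, subset_univ, true_and]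
    tauto
  have hdisj : Disjoint (powersetCard 3 L) (powersetCard 3 Lᶜ) := by
    refine disjoint_left.mpr fun S hL hLc => ?_
    obtain ⟨hSL, hS⟩ := mem_powersetCard.mp hL
    obtain ⟨x, hx⟩ := card_pos.mp (hS.symm ▸ three_pos : 0 < #S)
    exact mem_compl.mp ((mem_powersetCard.mp hLc).1 hx) (hSL hx)
  have hcount := card_filter_add_card_filter_not (s := powersetCard 3 (univ : Finset α))
    (p := fun S => S ⊆ L ∨ S ⊆ Lᶜ)
  simp only [not_or] at hcount
  rw [hsplit, card_union_of_disjoint hdisj, card_powersetCard, card_powersetCard,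
    card_powersetCard, card_univ, ← card_add_card_compl L] at hcount
  rw [mixedTriples, ← card_add_card_compl L]
  have := two_mul_add_choose_three #L #Lᶜ
  omega

end MixedTriples

theorem Finset.card_image_insert_sdiff {α : Type*} [DecidableEq α] (s t : Finset α) :
    #((s \ t).image (insert · t)) = #(s \ t) :=
  card_image_of_injOn fun _ hc _ _ h => (insert_inj (mem_sdiff.mp (mem_coe.mp hc)).2).mp h

section StanleyDecomp

variable {n : ℕ}

theorem stanleySpace_monomial (d : Fin n →₀ ℕ) (Z : Finset (Fin n)) :
    stanleySpace (monomial d (1 : K)) Z = restrictSupport K (stanleyExponents d Z) := by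
  rw [stanleySpace, restrictSupport_eq_span]
  congr 1
  ext p
  simp only [stanleyExponents, monomial_mul, one_mul, Set.mem_image]
  constructor
  · rintro ⟨e, he, rfl⟩
    exact ⟨d + e, ⟨e, he, rfl⟩, rfl⟩
  · rintro ⟨g, ⟨e, he, rfl⟩, rfl⟩
    exact ⟨e, he, rfl⟩

namespace IsStanleyDecomp

variable {I : Ideal (MvPolynomial (Fin n) K)} {s : ℕ}

theorem exists_exponents {u : Fin s → MvPolynomial (Fin n) K} {Z : Fin s → Finset (Fin n)}
    (h : IsStanleyDecomp I u Z) : ∃ d : Fin s → Fin n →₀ ℕ, u = fun i => monomial (d i) 1 :=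
  ⟨fun i => (h.1 i).choose, funext fun i => (h.1 i).choose_spec⟩

variable {d : Fin s → Fin n →₀ ℕ} {Z : Fin s → Finset (Fin n)}

theorem restrictScalars_eq (h : IsStanleyDecomp I (fun i => monomial (d i) 1) Z) :
    I.restrictScalars K = restrictSupport K (⋃ i, stanleyExponents (d i) (Z i)) := by
  rw [← h.2.2, restrictSupport_eq_span, Set.image_iUnion, Submodule.span_iUnion]
  simp_rw [stanleySpace_monomial, restrictSupport_eq_span]

theorem monomial_one_mem_iff (h : IsStanleyDecomp I (fun i => monomial (d i) 1) Z)
    {g : Fin n →₀ ℕ} : monomial g (1 : K) ∈ I ↔ ∃ i, g ∈ stanleyExponents (d i) (Z i) := by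
  rw [← Submodule.restrictScalars_mem K, h.restrictScalars_eq, monomial_mem_restrictSupport]
  simp

theorem pairwise_disjoint (h : IsStanleyDecomp I (fun i => monomial (d i) 1) Z) :
    Pairwise (Function.onFun Disjoint fun i => stanleyExponents (d i) (Z i)) := by
  intro i j hij
  refine Set.disjoint_left.mpr fun g hi hj => ?_
  have hzero := Submodule.disjoint_def.mp (h.2.1.pairwiseDisjoint hij) (monomial g (1 : K))
    (by simpa [stanleySpace_monomial] using hi) (by simpa [stanleySpace_monomial] using hj)
  exact one_ne_zero (monomial_eq_zero.mp hzero)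

theorem monomial_one_mem_of_le (h : IsStanleyDecomp I (fun i => monomial (d i) 1) Z) (i : Fin s)
    {g : Fin n →₀ ℕ} (hg : d i ≤ g) : monomial g (1 : K) ∈ I :=
  _root_.monomial_one_mem_of_le (h.monomial_one_mem_iff.mpr ⟨i, self_mem_stanleyExponents _ _⟩) hg

/-- The generator of a Stanley space containing `x^w x_a x_b` and `x^w x_a' x_b'` divides their
gcd, which divides some `x^w x_j`. -/
theorem eq_of_add_single_add_single_mem (h : IsStanleyDecomp I (fun i => monomial (d i) 1) Z)
    {w : Fin n →₀ ℕ} (hw : ∀ j, monomial (w + Finsupp.single j 1) (1 : K) ∉ I) {i : Fin s}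
    {a b a' b' : Fin n} (hab' : a ≠ b') (hba' : b ≠ a')
    (hp : w + Finsupp.single a 1 + Finsupp.single b 1 ∈ stanleyExponents (d i) (Z i))
    (hq : w + Finsupp.single a' 1 + Finsupp.single b' 1 ∈ stanleyExponents (d i) (Z i)) :
    a = a' ∧ b = b' := by
  have hp' := le_of_mem_stanleyExponents hp
  have hq' := le_of_mem_stanleyExponents hq
  by_contra hne
  by_cases hbb' : b = b'
  · subst hbb'
    rw [add_right_comm] at hp' hq'
    exact hw b (h.monomial_one_mem_of_le i
      (le_add_single_of_le_add_single_add_single hp' hq' hab' fun haa' => hne ⟨haa', rfl⟩))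
  · exact hw a (h.monomial_one_mem_of_le i
      (le_add_single_of_le_add_single_add_single hp' hq' hba' hbb'))

theorem card_mul_sub_two_le_card_mixedTriples
    (h : IsStanleyDecomp I (fun i => monomial (d i) 1) Z) (L : Finset (Fin n)) {w : Fin n →₀ ℕ}
    (hw : ∀ j, monomial (w + Finsupp.single j 1) (1 : K) ∉ I)
    (hwab : ∀ a ∈ L, ∀ b ∉ L, monomial (w + Finsupp.single a 1 + Finsupp.single b 1) (1 : K) ∈ I)
    {k : ℕ} (hk : ∀ i, k ≤ #(Z i)) : #L * #Lᶜ * (k - 2) ≤ #(mixedTriples L) := by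
  set P := L ×ˢ Lᶜ
  have hP (p : P) : p.1.1 ∈ L ∧ p.1.2 ∉ L := (mem_product.mp p.2).imp_right mem_compl.mp
  choose ι hι using fun p : P => h.monomial_one_mem_iff.mp (hwab _ (hP p).1 _ (hP p).2)
  let G (p : P) : Finset (Finset (Fin n)) :=
    (Z (ι p) \ {p.1.1, p.1.2}).image (insert · {p.1.1, p.1.2})
  have hG_card (p : P) : k - 2 ≤ #(G p) := by
    have := le_card_sdiff {p.1.1, p.1.2} (Z (ι p))
    have : #({p.1.1, p.1.2} : Finset (Fin n)) ≤ 2 := card_le_two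
    have := hk (ι p)
    rw [card_image_insert_sdiff]
    omega
  have hG_exp (p : P) : ∀ S ∈ G p,
      w + ∑ j ∈ S, Finsupp.single j 1 ∈ stanleyExponents (d (ι p)) (Z (ι p)) := by
    intro S hS
    obtain ⟨c, hc, rfl⟩ := mem_image.mp hS
    rw [sum_insert (mem_sdiff.mp hc).2, sum_pair fun heq : p.1.1 = p.1.2 => (hP p).2 (heq ▸ (hP p).1),
      show ∀ x y z : Fin n →₀ ℕ, w + (x + (y + z)) = w + y + z + x from fun _ _ _ => by abel]
    exact add_single_mem_stanleyExponents (hι p) (mem_sdiff.mp hc).1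
  have hG_disj : ((univ : Finset P) : Set P).PairwiseDisjoint G := by
    intro p _ q _ hpq
    refine disjoint_left.mpr fun S hSp hSq => hpq ?_
    have hιpq : ι p = ι q := by
      by_contra hne
      exact Set.disjoint_left.mp (h.pairwise_disjoint hne) (hG_exp p S hSp) (hG_exp q S hSq)
    have hq := hι q
    rw [← hιpq] at hq
    obtain ⟨h₁, h₂⟩ := h.eq_of_add_single_add_single_mem hw
      (fun heq : p.1.1 = q.1.2 => (hP q).2 (heq ▸ (hP p).1))
      (fun heq : p.1.2 = q.1.1 => (hP p).2 (heq ▸ (hP q).1)) (hι p) hq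
    exact Subtype.ext (Prod.ext h₁ h₂)
  calc #L * #Lᶜ * (k - 2) = ∑ _p : P, (k - 2) := by simp [P, card_product]
    _ ≤ ∑ p : P, #(G p) := sum_le_sum fun p _ => hG_card p
    _ = #(univ.biUnion G) := (card_biUnion hG_disj).symm
    _ ≤ #(mixedTriples L) := card_le_card <| biUnion_subset.mpr fun p _ S hS => by
      obtain ⟨c, hc, rfl⟩ := mem_image.mp hS
      exact insert_pair_mem_mixedTriples (hP p).1 (hP p).2 (mem_sdiff.mp hc).2

end IsStanleyDecomp

theorem sdepth_bot : sdepth (⊥ : Ideal (MvPolynomial (Fin n) K)) = 0 := by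
  have hall : ∀ k, ∃ (s : ℕ) (u : Fin s → MvPolynomial (Fin n) K) (Z : Fin s → Finset (Fin n)),
      IsStanleyDecomp ⊥ u Z ∧ ∀ i, k ≤ #(Z i) := fun k =>
    ⟨0, Fin.elim0, Fin.elim0, ⟨fun i => i.elim0, fun i => i.elim0, by simp⟩, fun i => i.elim0⟩
  simp [sdepth, hall]

theorem two_mul_sdepth_inf_le {L : Finset (Fin n)} {Q Q' : Ideal (MvPolynomial (Fin n) K)}
    (hQ : Q.IsPrimary) (hQ' : Q'.IsPrimary) (hr : Q.radical = Ideal.span (X '' ↑L))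
    (hr' : Q'.radical = Ideal.span (X '' ↑Lᶜ)) : 2 * sdepth (Q ⊓ Q') ≤ n + 2 := by
  rcases L.eq_empty_or_nonempty with rfl | hL
  · rw [coe_empty, Set.image_empty, Ideal.span_empty] at hr
    simp [le_bot_iff.mp (hr ▸ Q.le_radical), sdepth_bot]
  rcases Lᶜ.eq_empty_or_nonempty with hLc | hLc
  · rw [hLc, coe_empty, Set.image_empty, Ideal.span_empty] at hr'
    simp [le_bot_iff.mp (hr' ▸ Q'.le_radical), sdepth_bot]
  rw [coe_compl] at hr'
  obtain ⟨w, hw, hwab⟩ := exists_exponent_of_isPrimary_of_radical_eq_compl hQ hQ' hr hr'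
  suffices ∀ k ∈ {k | ∃ (s : ℕ) (u : Fin s → MvPolynomial (Fin n) K) (Z : Fin s → Finset (Fin n)),
      IsStanleyDecomp (Q ⊓ Q') u Z ∧ ∀ i, k ≤ #(Z i)}, k ≤ (n + 2) / 2 from
    (Nat.mul_le_mul_left 2 (csSup_le' this)).trans (Nat.mul_div_le (n + 2) 2)
  rintro k ⟨s, u, Z, hdec, hk⟩
  obtain ⟨d, rfl⟩ := hdec.exists_exponents
  have hcount : #L * #Lᶜ * (2 * (k - 2)) ≤ #L * #Lᶜ * (n - 2) :=
    calc #L * #Lᶜ * (2 * (k - 2)) = 2 * (#L * #Lᶜ * (k - 2)) := by ring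
      _ ≤ 2 * #(mixedTriples L) :=
        Nat.mul_le_mul_left 2 (hdec.card_mul_sub_two_le_card_mixedTriples L hw hwab hk)
      _ = #L * #Lᶜ * (n - 2) := by rw [two_mul_card_mixedTriples, Fintype.card_fin]
  have hk2 := Nat.le_of_mul_le_mul_left hcount (Nat.mul_pos hL.card_pos hLc.card_pos)
  have hn : #L + #Lᶜ = n := by rw [card_add_card_compl, Fintype.card_fin]
  have := hL.card_pos
  have := hLc.card_pos
  omega

end StanleyDecomp

theorem sdepth_inter_le_of_disjoint_radicals_general {n t : ℕ}
    (Q Q' : Ideal (MvPolynomial (Fin n) K))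
    (hQp : Q.IsPrimary) (hQ'p : Q'.IsPrimary)
    (hQr : Q.radical =
      Ideal.span ((fun i => (X i : MvPolynomial (Fin n) K)) '' {i | (i : ℕ) < t}))
    (hQ'r : Q'.radical =
      Ideal.span ((fun i => (X i : MvPolynomial (Fin n) K)) '' {i | t ≤ (i : ℕ)})) :
    2 * sdepth (Q ⊓ Q') ≤ n + 2 := by
  let L : Finset (Fin n) := {i | (i : ℕ) < t}
  refine two_mul_sdepth_inf_le (L := L) hQp hQ'p ?_ ?_
  · rw [hQr]; congr; ext; simp [L]
  · rw [hQ'r]; congr; ext; simp [L]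

/-- If `Q, Q'` are monomial primary ideals with `√Q = (x_1,…,x_t)` and
`√Q' = (x_{t+1},…,x_n)`, `t ≥ 2`, `n ≥ 4`, then `sdepth(Q ∩ Q') ≤ (n+2)/2`,
i.e. `2·sdepth(Q ∩ Q') ≤ n + 2`. -/
theorem sdepth_inter_le_of_disjoint_radicals {n t : ℕ} (ht : 2 ≤ t) (hn : 4 ≤ n)
    (Q Q' : Ideal (MvPolynomial (Fin n) K))
    (hQm : IsMonomialIdeal Q) (hQ'm : IsMonomialIdeal Q')
    (hQp : Q.IsPrimary) (hQ'p : Q'.IsPrimary)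
    (hQr : Q.radical =
      Ideal.span ((fun i => (X i : MvPolynomial (Fin n) K)) '' {i | (i : ℕ) < t}))
    (hQ'r : Q'.radical =
      Ideal.span ((fun i => (X i : MvPolynomial (Fin n) K)) '' {i | t ≤ (i : ℕ)})) :
    2 * sdepth (Q ⊓ Q') ≤ n + 2 :=
  sdepth_inter_le_of_disjoint_radicals_general Q Q' hQp hQ'p hQr hQ'r
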